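/- arXiv:1311.2071 — 2 statements merged into one kernel-verified Lean document; each statement's English description precedes it below -/
import Mathlib

section
/- Let A be a Noetherian local ring with maximal ideal m, let B be a finite A-algebra, and let I be an ideal of B such that B/I is flat as an A-module and the image of I in B/mB is zero. Then I = 0. -/
/-- Let `A` be a Noetherian local ring with maximal ideal `m`, let `B` be a finite
`A`-algebra, and let `I` be an ideal of `B` such that `B/I` is flat as an `A`-module
and the image of `I` in `B/mB` is zero.  Then `I = 0`. -/
theorem ideal_eq_bot_of_flat_quotient_of_le_map_maximalIdeal
    {A B : Type*} [CommRing A] [CommRing B] [Algebra A B]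
    [IsNoetherianRing A] [IsLocalRing A] [Module.Finite A B]
    (I : Ideal B) [Module.Flat A (B ⧸ I)]
    (h : I ≤ Ideal.map (algebraMap A B) (IsLocalRing.maximalIdeal A)) :
    I = ⊥ := by
  have hNoeth : IsNoetherian A B := isNoetherian_of_isNoetherianRing_of_finite A B
  set π : B →ₗ[A] B ⧸ I := (Ideal.Quotient.mkₐ A I).toLinearMap with hπdef
  have hπ : Function.Surjective π := Ideal.Quotient.mk_surjective
  have : Module.Finite A (B ⧸ I) := Module.Finite.of_surjective π hπ
  have : Module.FinitePresentation A (B ⧸ I) := Module.finitePresentation_of_finite A _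
  have : Module.Free A (B ⧸ I) := Module.free_of_flat_of_isLocalRing
  obtain ⟨s, hs⟩ := Module.projective_lifting_property π LinearMap.id hπ
  set p : B →ₗ[A] B := LinearMap.id - s ∘ₗ π with hpdef
  have hrange : ∀ x : B, p x ∈ I := by
    intro x
    have : π (p x) = 0 := by
      simp only [hpdef, LinearMap.sub_apply, LinearMap.id_apply, LinearMap.comp_apply, map_sub]
      rw [← LinearMap.comp_apply π s, hs]
      simp
    simpa [π, Ideal.Quotient.eq_zero_iff_mem] using this
  have hfix : ∀ x ∈ I, p x = x := by
    intro x hx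
    have hπx : π x = 0 := by simpa [π, Ideal.Quotient.eq_zero_iff_mem] using hx
    simp [hpdef, hπx]
  have key : I.restrictScalars A ≤
      (IsLocalRing.maximalIdeal A) • (I.restrictScalars A) := by
    intro x hx
    have hx' : x ∈ (IsLocalRing.maximalIdeal A) • (⊤ : Submodule A B) := by
      rw [Ideal.smul_top_eq_map]
      exact h hx
    have hmem : p x ∈ Submodule.map p
        ((IsLocalRing.maximalIdeal A) • (⊤ : Submodule A B)) :=
      Submodule.mem_map_of_mem hx'
    rw [Submodule.map_smul''] at hmem
    have hle : (IsLocalRing.maximalIdeal A) • Submodule.map p ⊤ ≤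
        (IsLocalRing.maximalIdeal A) • (I.restrictScalars A) := by
      refine Submodule.smul_mono le_rfl ?_
      rintro y ⟨z, -, rfl⟩
      exact hrange z
    rw [hfix x hx] at hmem
    exact hle hmem
  have hfg : (I.restrictScalars A).FG := IsNoetherian.noetherian _
  have hbot : I.restrictScalars A = ⊥ :=
    Submodule.eq_bot_of_le_smul_of_le_jacobson_bot (IsLocalRing.maximalIdeal A) _ hfg key
      (by rw [IsLocalRing.jacobson_eq_maximalIdeal ⊥ bot_ne_top])
  simpa [Submodule.restrictScalars_eq_bot_iff] using hbot
end

section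
/- Fix a field k, integers a₁ > ... > a_k, a composition n = n₁ + ... + n_k, and γ(t) the block diagonal matrix with blocks t^{a_i}·I_{n_i}. Let Γ = {(t, g, γ(t)·g·γ(t)⁻¹) : t ∈ k×, g ∈ GL_n(k)} ⊆ 𝔸¹ × GL_n × GL_n. Then for any point (0, g₁, g₂) in the Zariski closure of Γ, the matrix g₁ is block upper triangular, g₂ is block lower triangular, and the block diagonal parts of g₁ and g₂ coincide; that is, the fiber of the closure of Γ over t = 0 is contained in P ×_M P⁻. -/
section

variable {k : Type*} [Field k] {n r : ℕ}

/-- `g` is block upper triangular for the block structure given by `c`. -/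
def IsBlockUpper (c : Fin n → Fin r) (g : Matrix (Fin n) (Fin n) k) : Prop :=
  ∀ i j, c j < c i → g i j = 0

/-- `g` is block lower triangular for the block structure given by `c`. -/
def IsBlockLower (c : Fin n → Fin r) (g : Matrix (Fin n) (Fin n) k) : Prop :=
  ∀ i j, c i < c j → g i j = 0

/-- The block diagonal part of `g`. -/
def blockDiagPart (c : Fin n → Fin r) (g : Matrix (Fin n) (Fin n) k) :
    Matrix (Fin n) (Fin n) k :=
  Matrix.of fun i j => if c i = c j then g i j else 0

/-- The cocharacter `γ(t)` for `t ∈ kˣ`: the block diagonal matrix with blocks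
`t^{aᵢ}·I_{nᵢ}`. -/
def gammaMat (a : Fin r → ℤ) (c : Fin n → Fin r) (t : kˣ) :
    Matrix (Fin n) (Fin n) k :=
  Matrix.diagonal fun i => ((t ^ a (c i) : kˣ) : k)

/-- The graph `Γ = {(t, g, γ(t)·g·γ(t)⁻¹) : t ∈ k×, g ∈ GL_n(k)}` inside
`𝔸¹ × GL_n × GL_n`. -/
def gammaGraph (a : Fin r → ℤ) (c : Fin n → Fin r) :
    Set (k × Matrix (Fin n) (Fin n) k × Matrix (Fin n) (Fin n) k) :=
  {x | ∃ (t : kˣ) (g : (Matrix (Fin n) (Fin n) k)ˣ),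
    x = ((t : k), ((g : Matrix (Fin n) (Fin n) k),
      gammaMat a c t * (g : Matrix (Fin n) (Fin n) k) * gammaMat (fun i => -a i) c t))}

/-- Coordinates of a point of `𝔸¹ × Mat_n × Mat_n`. -/
def coords (x : k × Matrix (Fin n) (Fin n) k × Matrix (Fin n) (Fin n) k) :
    Unit ⊕ (Fin n × Fin n) ⊕ (Fin n × Fin n) → k :=
  Sum.elim (fun _ => x.1)
    (Sum.elim (fun ij => x.2.1 ij.1 ij.2) (fun ij => x.2.2 ij.1 ij.2))

lemma sandwich_aux {k : Type*} [Field k] (t : kˣ) (x : k) (z w : ℤ) (h : z + w = 0) :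
    ((t ^ z : kˣ) : k) * x * ((t ^ w : kˣ) : k) = x := by
  have h1 : ((t ^ z : kˣ) : k) * ((t ^ w : kˣ) : k) = 1 := by
    rw [← Units.val_mul, ← zpow_add, h, zpow_zero, Units.val_one]
  calc ((t ^ z : kˣ) : k) * x * ((t ^ w : kˣ) : k)
      = ((t ^ z : kˣ) : k) * ((t ^ w : kˣ) : k) * x := by ring
    _ = x := by rw [h1, one_mul]

lemma pow_sandwich_aux {k : Type*} [Field k] (t : kˣ) (x : k) (m : ℕ) (z w : ℤ)
    (h : (m : ℤ) + z + w = 0) :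
    ((t : k)) ^ m * (((t ^ z : kˣ) : k) * x * ((t ^ w : kˣ) : k)) = x := by
  have h2 := sandwich_aux t x ((m : ℤ) + z) w (by linarith)
  rw [zpow_add, zpow_natCast, Units.val_mul, Units.val_pow_eq_pow_val] at h2
  calc ((t : k)) ^ m * (((t ^ z : kˣ) : k) * x * ((t ^ w : kˣ) : k))
      = (t : k) ^ m * ((t ^ z : kˣ) : k) * x * ((t ^ w : kˣ) : k) := by ring
    _ = x := h2

lemma diag_pow_aux {k : Type*} [Field k] (t : kˣ) (x : k) (m : ℕ) (z w : ℤ)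
    (h : z + w = (m : ℤ)) :
    ((t ^ z : kˣ) : k) * x * ((t ^ w : kˣ) : k) = ((t : k)) ^ m * x := by
  have h1 : ((t ^ z : kˣ) : k) * ((t ^ w : kˣ) : k) = ((t : k)) ^ m := by
    rw [← Units.val_mul, ← zpow_add, h, zpow_natCast, Units.val_pow_eq_pow_val]
  calc ((t ^ z : kˣ) : k) * x * ((t ^ w : kˣ) : k)
      = ((t ^ z : kˣ) : k) * ((t ^ w : kˣ) : k) * x := by ring
    _ = ((t : k)) ^ m * x := by rw [h1]

/-- Fix integers `a₁ > ⋯ > a_r` and a composition `n = n₁ + ⋯ + n_r` (encoded by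
the monotone surjection `c`), with `γ(t)` the block diagonal matrix with blocks
`t^{aᵢ}·I_{nᵢ}`, and let `Γ = {(t, g, γ(t)gγ(t)⁻¹)} ⊆ 𝔸¹ × GL_n × GL_n`.  For any
point `(0, g₁, g₂)` in the Zariski closure of `Γ` (i.e. killed by every polynomial
vanishing on `Γ`), the matrix `g₁` is block upper triangular, `g₂` is block lower
triangular, and their block diagonal parts coincide; that is, the fiber of the
closure of `Γ` over `t = 0` is contained in `P ×_M P⁻`. -/
theorem closure_fiber_at_zero_subset_P_timesM_Pminus
    (a : Fin r → ℤ) (ha : StrictAnti a) (c : Fin n → Fin r)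
    (hmono : Monotone c) (hsurj : Function.Surjective c)
    (g₁ g₂ : Matrix (Fin n) (Fin n) k)
    (hg₁ : IsUnit g₁.det) (hg₂ : IsUnit g₂.det)
    (hcl : ∀ p : MvPolynomial (Unit ⊕ (Fin n × Fin n) ⊕ (Fin n × Fin n)) k,
      (∀ x ∈ gammaGraph a c, MvPolynomial.eval (coords x) p = 0) →
      MvPolynomial.eval (coords ((0 : k), (g₁, g₂))) p = 0) :
    IsBlockUpper c g₁ ∧ IsBlockLower c g₂ ∧
      blockDiagPart c g₁ = blockDiagPart c g₂ := by
  classical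
  have hupper : IsBlockUpper c g₁ := by
    intro i j hij
    have hlt : a (c i) < a (c j) := ha hij
    set m : ℕ := (a (c j) - a (c i)).toNat with hm
    have hmz : (m : ℤ) = a (c j) - a (c i) := Int.toNat_of_nonneg (by omega)
    have hmpos : 0 < m := by omega
    have key := hcl (MvPolynomial.X (Sum.inr (Sum.inl (i, j))) -
        MvPolynomial.X (Sum.inl ()) ^ m * MvPolynomial.X (Sum.inr (Sum.inr (i, j)))) ?_
    · simpa [coords, zero_pow hmpos.ne', sub_eq_zero] using key
    · rintro x ⟨t, g, rfl⟩
      simp only [coords, map_sub, map_mul, map_pow, MvPolynomial.eval_X, Sum.elim_inl,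
        Sum.elim_inr, gammaMat, Matrix.diagonal_mul, Matrix.mul_diagonal]
      rw [pow_sandwich_aux t _ m (a (c i)) (-(a (c j))) (by omega), sub_self]
  have hlower : IsBlockLower c g₂ := by
    intro i j hij
    have hlt : a (c j) < a (c i) := ha hij
    set m : ℕ := (a (c i) - a (c j)).toNat with hm
    have hmz : (m : ℤ) = a (c i) - a (c j) := Int.toNat_of_nonneg (by omega)
    have hmpos : 0 < m := by omega
    have key := hcl (MvPolynomial.X (Sum.inr (Sum.inr (i, j))) -
        MvPolynomial.X (Sum.inl ()) ^ m * MvPolynomial.X (Sum.inr (Sum.inl (i, j)))) ?_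
    · simpa [coords, zero_pow hmpos.ne', sub_eq_zero] using key
    · rintro x ⟨t, g, rfl⟩
      simp only [coords, map_sub, map_mul, map_pow, MvPolynomial.eval_X, Sum.elim_inl,
        Sum.elim_inr, gammaMat, Matrix.diagonal_mul, Matrix.mul_diagonal]
      rw [diag_pow_aux t _ m (a (c i)) (-(a (c j))) (by omega), sub_self]
  refine ⟨hupper, hlower, ?_⟩
  ext i j
  simp only [blockDiagPart, Matrix.of_apply]
  split
  · next hcij =>
    have key := hcl (MvPolynomial.X (Sum.inr (Sum.inl (i, j))) -
        MvPolynomial.X (Sum.inr (Sum.inr (i, j)))) ?_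
    · simpa [coords, sub_eq_zero] using key
    · rintro x ⟨t, g, rfl⟩
      simp only [coords, map_sub, MvPolynomial.eval_X, Sum.elim_inl, Sum.elim_inr,
        gammaMat, Matrix.diagonal_mul, Matrix.mul_diagonal]
      rw [sandwich_aux t _ (a (c i)) (-(a (c j))) (by rw [hcij]; ring), sub_self]
  · rfl

end
end
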